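/- arXiv:2104.09860 — 2 statements merged into one kernel-verified Lean document; each statement's English description precedes it below -/
import Mathlib

section
/- Let X ⊆ A^ℤ and Y ⊆ B^ℤ be two-sided subshifts and let φ' : X' → Y' be a topological conjugacy. Suppose a ∈ A is such that the constant point s = a^ℤ lies in X, and suppose σ(y) = y for every y ∈ sR. Then there exists n ∈ ℕ such that for every x ∈ X' and every i ∈ ℤ, if x_j = a for all j with i - n ≤ j ≤ i + 1 + n, then φ'(x)_i = φ'(x)_{i+1}. -/
open Set

/-- The two-sided shift map on `A^ℤ`: `(tshift x) i = x (i+1)`. -/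
def tshift {A : Type*} (x : ℤ → A) : ℤ → A := fun i => x (i + 1)

/-- A two-sided point is periodic if `σ^n x = x` for some `n ≥ 1`. -/
def TPeriodic {A : Type*} (x : ℤ → A) : Prop := ∃ n : ℕ, 1 ≤ n ∧ tshift^[n] x = x

/-- `Aper X` is the set `X'` of aperiodic points of `X`. -/
def Aper {A : Type*} (X : Set (ℤ → A)) : Set (ℤ → A) := {x ∈ X | ¬ TPeriodic x}

/-- The word `w` occurs in `x` at position `i`. -/
def OccursAt {A : Type*} (w : List A) (x : ℤ → A) (i : ℤ) : Prop :=
  ∀ j : Fin w.length, x (i + (j : ℕ)) = w.get j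

/-- The word `w` occurs somewhere in `x`. -/
def OccursIn {A : Type*} (w : List A) (x : ℤ → A) : Prop := ∃ i : ℤ, OccursAt w x i

/-- The word `w` occurs in some point of `X`. -/
def WordIn {A : Type*} (w : List A) (X : Set (ℤ → A)) : Prop := ∃ x ∈ X, OccursIn w x

/-- `X` is a (two-sided) subshift: a closed shift-invariant subset of the full shift. -/
def IsSubshift {A : Type*} [TopologicalSpace A] (X : Set (ℤ → A)) : Prop :=
  IsClosed X ∧ tshift '' X = X

/-- `X` is an SFT: it is defined by forbidding a finite set of finite words. -/
def IsSFT {A : Type*} (X : Set (ℤ → A)) : Prop :=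
  ∃ F : Set (List A), F.Finite ∧ X = {x | ∀ w ∈ F, ¬ OccursIn w x}

/-- `X` is transitive: any two words of its language can be joined by a connecting word. -/
def IsTransitiveShift {A : Type*} (X : Set (ℤ → A)) : Prop :=
  ∀ u v : List A, WordIn u X → WordIn v X → ∃ w : List A, WordIn (u ++ w ++ v) X

/-- A map between subsets of full shifts is shift-commuting (wherever the shift stays
in the domain set, which is always the case for shift-invariant sets). -/
def ShiftCommuting2 {A B : Type*} {X : Set (ℤ → A)} {Y : Set (ℤ → B)} (f : X → Y) : Prop :=
  ∀ (x : X) (hx : tshift (x : ℤ → A) ∈ X),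
    (f ⟨tshift (x : ℤ → A), hx⟩ : ℤ → B) = tshift (f x : ℤ → B)

/-- `φ : X → Y` restricts (in domain and codomain) to `φ' : X' → Y'`. -/
def RestrictsTo2 {A B : Type*} {X : Set (ℤ → A)} {Y : Set (ℤ → B)}
    (φ : X → Y) (φ' : Aper X → Aper Y) : Prop :=
  ∀ (x : ℤ → A) (hx : x ∈ Aper X), (φ ⟨x, hx.1⟩ : ℤ → B) = (φ' ⟨x, hx⟩ : ℤ → B)


/-- The relation `R ⊆ X × Y`: the closure of the graph `{(x, φ'(x)) : x ∈ X'}`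
(taken in the ambient product space; for closed `X`, `Y` this coincides with the
closure in `X × Y`). -/
def graphRel {A B : Type*} [TopologicalSpace A] [TopologicalSpace B]
    {X : Set (ℤ → A)} {Y : Set (ℤ → B)} (φ' : Aper X → Aper Y) :
    Set ((ℤ → A) × (ℤ → B)) :=
  closure {p | ∃ x : Aper X, p = ((x : ℤ → A), (φ' x : ℤ → B))}

/-! If no `n` works, pick for every `n` an aperiodic `x` with `x = a` on `[-n, n + 1]` but
`φ'(x)₀ ≠ φ'(x)₁` (shifting the bad position to `0`). These points converge to `a^ℤ`, so by
compactness of `B^ℤ` their graph points accumulate at some `(a^ℤ, y) ∈ R` with `y ∈ Y`. The closed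
condition `y₀ ≠ y₁` passes to the limit, contradicting `σ y = y`. -/

open Filter Topology

def shiftBy {A : Type*} (k : ℤ) (x : ℤ → A) : ℤ → A := fun i => x (i + k)

section Shift

variable {A B : Type*}

@[simp]
lemma shiftBy_apply (k : ℤ) (x : ℤ → A) (i : ℤ) : shiftBy k x i = x (i + k) := rfl

@[simp]
lemma shiftBy_zero (x : ℤ → A) : shiftBy 0 x = x := by
  funext i; simp

lemma shiftBy_shiftBy (k l : ℤ) (x : ℤ → A) : shiftBy k (shiftBy l x) = shiftBy (k + l) x := by
  funext i; simp only [shiftBy_apply, add_assoc]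

lemma tshift_shiftBy (k : ℤ) (x : ℤ → A) : tshift (shiftBy k x) = shiftBy (k + 1) x := by
  funext i; simp only [tshift, shiftBy_apply, add_assoc, add_comm 1 k]

lemma shiftBy_injective (k : ℤ) : Function.Injective (shiftBy k : (ℤ → A) → ℤ → A) :=
  Function.LeftInverse.injective (g := shiftBy (-k)) fun x => by simp [shiftBy_shiftBy]

lemma tshift_injective : Function.Injective (tshift : (ℤ → A) → ℤ → A) :=
  shiftBy_injective 1

lemma tshift_mem_iff {X : Set (ℤ → A)} (hX : tshift '' X = X) {x : ℤ → A} :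
    tshift x ∈ X ↔ x ∈ X := by
  simpa only [hX] using tshift_injective.mem_set_image (s := X) (a := x)

lemma shiftBy_mem_iff {X : Set (ℤ → A)} (hX : tshift '' X = X) (k : ℤ) {x : ℤ → A} :
    shiftBy k x ∈ X ↔ x ∈ X := by
  induction k using Int.induction_on with
  | zero => simp
  | succ k ih => rw [← tshift_shiftBy, tshift_mem_iff hX, ih]
  | pred k ih => rw [← ih, ← tshift_mem_iff hX, tshift_shiftBy, sub_add_cancel]

lemma TPeriodic.of_shiftBy {k : ℤ} {x : ℤ → A} (h : TPeriodic (shiftBy k x)) : TPeriodic x := by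
  obtain ⟨n, hn, hper⟩ := h
  have hcomm : Function.Commute tshift (shiftBy k : (ℤ → A) → ℤ → A) := fun x =>
    funext fun i => by simp only [tshift, shiftBy_apply, add_right_comm]
  refine ⟨n, hn, shiftBy_injective k ?_⟩
  rwa [← hcomm.iterate_left n x]

lemma shiftBy_mem_aper {X : Set (ℤ → A)} (hX : tshift '' X = X) (k : ℤ) {x : ℤ → A}
    (hx : x ∈ Aper X) : shiftBy k x ∈ Aper X :=
  ⟨(shiftBy_mem_iff hX k).2 hx.1, fun h => hx.2 h.of_shiftBy⟩

lemma ShiftCommuting2.apply_shiftBy {X : Set (ℤ → A)} {Y : Set (ℤ → B)} {f : X → Y}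
    (hf : ShiftCommuting2 f) {x : ℤ → A} (hx : x ∈ X) (horbit : ∀ k : ℤ, shiftBy k x ∈ X)
    (k : ℤ) : (f ⟨shiftBy k x, horbit k⟩ : ℤ → B) = shiftBy k (f ⟨x, hx⟩) := by
  have f_congr : ∀ {z w : ℤ → A} (hz : z ∈ X) (hw : w ∈ X), z = w →
      (f ⟨z, hz⟩ : ℤ → B) = f ⟨w, hw⟩ := by
    rintro _ _ _ _ rfl; rfl
  have step : ∀ k : ℤ, (f ⟨shiftBy (k + 1) x, horbit (k + 1)⟩ : ℤ → B) =
      tshift (f ⟨shiftBy k x, horbit k⟩) := fun k => by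
    rw [← hf ⟨shiftBy k x, horbit k⟩ (tshift_shiftBy k x ▸ horbit (k + 1))]
    exact f_congr _ _ (tshift_shiftBy k x).symm
  induction k using Int.induction_on with
  | zero => simp only [shiftBy_zero]
  | succ k ih => rw [step, ih, tshift_shiftBy]
  | pred k ih =>
    apply tshift_injective
    rw [← step, sub_add_cancel, ih, tshift_shiftBy, sub_add_cancel]

end Shift

lemma tendsto_const_of_eq_on_window {A : Type*} [TopologicalSpace A] {x : ℕ → ℤ → A} {a : A}
    (hx : ∀ n : ℕ, ∀ j : ℤ, -(n : ℤ) ≤ j → j ≤ n → x n j = a) :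
    Tendsto x atTop (𝓝 fun _ => a) :=
  tendsto_pi_nhds.2 fun j => tendsto_nhds_of_eventually_eq <|
    (eventually_ge_atTop j.natAbs).mono fun n hn => hx n j (by omega) (by omega)

lemma exists_prodMk_mem_closure_of_tendsto_fst {X Z : Type*} [TopologicalSpace X]
    [TopologicalSpace Z] [SeqCompactSpace Z] {S : Set (X × Z)} {p : ℕ → X × Z}
    (hpS : ∀ n, p n ∈ S) {x : X} (hx : Tendsto (fun n => (p n).1) atTop (𝓝 x)) :
    ∃ z, (x, z) ∈ closure S := by
  obtain ⟨z, ψ, hψ, hz⟩ := SeqCompactSpace.tendsto_subseq fun n => (p n).2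
  exact ⟨z, mem_closure_of_tendsto ((hx.comp hψ.tendsto_atTop).prodMk_nhds hz)
    (Eventually.of_forall fun n => hpS (ψ n))⟩

theorem statement6_general {A B : Type*} [TopologicalSpace A]
    [Fintype B] [TopologicalSpace B] [DiscreteTopology B]
    (X : Set (ℤ → A)) (Y : Set (ℤ → B))
    (hX : IsSubshift X) (hY : IsSubshift Y)
    (φ' : Aper X ≃ₜ Aper Y) (hφ' : ShiftCommuting2 ⇑φ')
    (a : A)
    (hfix : ∀ y ∈ Y, ((fun _ : ℤ => a), y) ∈ graphRel ⇑φ' → tshift y = y) :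
    ∃ n : ℕ, ∀ (x : ℤ → A) (hx : x ∈ Aper X) (i : ℤ),
      (∀ j : ℤ, i - (n : ℤ) ≤ j ∧ j ≤ i + 1 + (n : ℤ) → x j = a) →
      (φ' ⟨x, hx⟩ : ℤ → B) i = (φ' ⟨x, hx⟩ : ℤ → B) (i + 1) := by
  by_contra! h
  choose x hx i hwin hne using h
  set S : Set ((ℤ → A) × (ℤ → B)) :=
    {p | ∃ z : Aper X, p = ((z : ℤ → A), (φ' z : ℤ → B))} ∩ {p | p.2 0 ≠ p.2 1}
  have horbit n k : shiftBy k (x n) ∈ Aper X := shiftBy_mem_aper hX.2 k (hx n)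
  have hS n : (shiftBy (i n) (x n), shiftBy (i n) (φ' ⟨x n, hx n⟩ : ℤ → B)) ∈ S := by
    refine ⟨⟨⟨_, horbit n (i n)⟩, ?_⟩, ?_⟩
    · rw [hφ'.apply_shiftBy (hx n) (horbit n)]
    · simpa [add_comm] using hne n
  obtain ⟨y, hy⟩ := exists_prodMk_mem_closure_of_tendsto_fst hS
    (tendsto_const_of_eq_on_window fun n j hj hj' => hwin n (j + i n) ⟨by omega, by omega⟩)
  have hyR : ((fun _ => a), y) ∈ graphRel ⇑φ' := closure_mono inter_subset_left hy
  have hyY : y ∈ Y := by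
    refine closure_minimal (fun p hp => ?_) (hY.1.preimage continuous_snd) hy
    obtain ⟨z, rfl⟩ := hp.1
    exact (φ' z).2.1
  have hy01 : y 0 ≠ y 1 := closure_minimal inter_subset_right
    ((isClosed_discrete {q : B × B | q.1 ≠ q.2}).preimage
      (show Continuous fun p : (ℤ → A) × (ℤ → B) => (p.2 0, p.2 1) by fun_prop)) hy
  exact hy01 (congrFun (hfix y hyY hyR) 0).symm

/-- Suppose `s = a^ℤ ∈ X` and every `y ∈ sR` is fixed by the shift. Then
there is `n` such that for every aperiodic `x ∈ X'`: whenever `x` equals `a` on the whole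
interval `[i - n, i + 1 + n]`, the images satisfy `φ'(x)_i = φ'(x)_{i+1}`. -/
theorem statement6 {A B : Type*} [Fintype A] [TopologicalSpace A] [DiscreteTopology A]
    [Fintype B] [TopologicalSpace B] [DiscreteTopology B]
    (X : Set (ℤ → A)) (Y : Set (ℤ → B))
    (hX : IsSubshift X) (hY : IsSubshift Y)
    (φ' : Aper X ≃ₜ Aper Y) (hφ' : ShiftCommuting2 ⇑φ')
    (a : A) (hs : (fun _ : ℤ => a) ∈ X)
    (hfix : ∀ y ∈ Y, ((fun _ : ℤ => a), y) ∈ graphRel ⇑φ' → tshift y = y) :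
    ∃ n : ℕ, ∀ (x : ℤ → A) (hx : x ∈ Aper X) (i : ℤ),
      (∀ j : ℤ, i - (n : ℤ) ≤ j ∧ j ≤ i + 1 + (n : ℤ) → x j = a) →
      (φ' ⟨x, hx⟩ : ℤ → B) i = (φ' ⟨x, hx⟩ : ℤ → B) (i + 1) :=
  statement6_general X Y hX hY φ' hφ' a hfix
end

section
/- Let Z ⊆ A^ℤ be a two-sided subshift in which every periodic point is synchronizing and such that neither Z_ℕ nor Z_{-ℕ} has an isolated periodic point, and let X = Z_ℕ. Then every continuous shift-commuting map φ' : X' → X' extends uniquely to a continuous map φ : X → X with φ ∘ σ = σ ∘ φ, and the extension map φ' ↦ φ is an injective monoid homomorphism from the monoid (under composition) of continuous shift-commuting self-maps of X' into End(X), the monoid of continuous σ-commuting self-maps of X. -/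
open Set

/-- The one-sided shift map on `A^ℕ`. -/
def oshift {A : Type*} (x : ℕ → A) : ℕ → A := fun i => x (i + 1)

/-- A one-sided point is periodic if `σ^n x = x` for some `n ≥ 1`. -/
def OPeriodic {A : Type*} (x : ℕ → A) : Prop := ∃ n : ℕ, 1 ≤ n ∧ oshift^[n] x = x

/-- `X_ℕ`: the set of right tails `(x_i)_{i ≥ 0}` of points of `X`. -/
def posRay {A : Type*} (X : Set (ℤ → A)) : Set (ℕ → A) :=
  (fun x : ℤ → A => fun n : ℕ => x (n : ℤ)) '' X

/-- `X_{-ℕ}`: the set of left tails `(x_{-i})_{i ≥ 0}` of points of `X`, as a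
one-sided system (its shift, shifting in the other direction, becomes `oshift`). -/
def negRay {A : Type*} (X : Set (ℤ → A)) : Set (ℕ → A) :=
  (fun x : ℤ → A => fun n : ℕ => x (-(n : ℤ))) '' X

/-- A one-sided system `S` has an isolated periodic point. -/
def HasIsolatedPeriodicPt {A : Type*} [TopologicalSpace A] (S : Set (ℕ → A)) : Prop :=
  ∃ x ∈ S, OPeriodic x ∧ ∃ U : Set (ℕ → A), IsOpen U ∧ U ∩ S = {x}

/-- The point `s` is synchronizing in `X`: for some `ℓ`, any two points of `X` agreeing
with `s` on `[-ℓ, ℓ]` can be glued along `s` there. -/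
def Synchronizing {A : Type*} (X : Set (ℤ → A)) (s : ℤ → A) : Prop :=
  ∃ l : ℕ, ∀ x ∈ X, ∀ y ∈ X,
    (∀ i : ℤ, -(l : ℤ) ≤ i ∧ i ≤ (l : ℤ) → x i = s i) →
    (∀ i : ℤ, -(l : ℤ) ≤ i ∧ i ≤ (l : ℤ) → y i = s i) →
    (fun i : ℤ => if i < -(l : ℤ) then x i else if i ≤ (l : ℤ) then s i else y i) ∈ X

/-- `Aper1 X` is the set `X'` of aperiodic points of a one-sided system `X`. -/
def Aper1 {A : Type*} (X : Set (ℕ → A)) : Set (ℕ → A) := {x ∈ X | ¬ OPeriodic x}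

/-- A map between subsets of one-sided full shifts is shift-commuting: whenever both `x`
and `oshift x` lie in the domain set, the map intertwines the shifts there. -/
def ShiftCommuting1 {A B : Type*} {X : Set (ℕ → A)} {Y : Set (ℕ → B)} (f : X → Y) : Prop :=
  ∀ (x : X) (hx : oshift (x : ℕ → A) ∈ X),
    (f ⟨oshift (x : ℕ → A), hx⟩ : ℕ → B) = oshift (f x : ℕ → B)

/-- `φ : X → Y` restricts (in domain and codomain) to `φ' : X' → Y'` (one-sided). -/
def RestrictsTo1 {A B : Type*} {X : Set (ℕ → A)} {Y : Set (ℕ → B)}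
    (φ : X → Y) (φ' : Aper1 X → Aper1 Y) : Prop :=
  ∀ (x : ℕ → A) (hx : x ∈ Aper1 X), (φ ⟨x, hx.1⟩ : ℕ → B) = (φ' ⟨x, hx⟩ : ℕ → B)

/-- `Y` is a one-sided subshift: closed and invariant under the one-sided shift. -/
def IsSubshift1 {A : Type*} [TopologicalSpace A] (Y : Set (ℕ → A)) : Prop :=
  IsClosed Y ∧ oshift '' Y ⊆ Y


/-!
Aperiodic points are dense in `X = Z_ℕ`, and so are the points `x` with `x` and `σ x` both
aperiodic. Hence a continuous extension of `φ'` is unique and automatically shift-commuting, and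
it exists as soon as `φ'` has a limit at every periodic point `p` of `X`.

All constructions glue along the two-sided periodic orbit `s` of a periodic point `p`, which is
synchronizing: two points of `X` that both begin with a long block of `p` can be spliced, keeping
a prefix of the first and continuing with the second. Since `Z_{-ℕ}` has no isolated periodic
point, a left ray close to but different from that of `s` glues to `s`, which gives an aperiodic
`ρ ∈ X` with `σ^K ρ = p`. For aperiodic `y` close to `p`, the splice `χ = ρ[0,K) y` is close to
`ρ` and `σ^K χ = y`, so `φ' y = σ^K (φ' χ)` is close to `σ^K (φ' ρ)`: this is the limit at `p`.
Likewise, since `Z_ℕ` has no isolated periodic point, there is a periodic `x ≠ z` close to a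
periodic `z`; a common period `M` of `x` and `z` turns `x[0,M) z` into a point close to `z` that
is eventually `z` but not `z`, hence aperiodic.
-/

open Function Filter Topology PiNat

section

variable {A : Type*}

lemma oshift_iterate_apply (x : ℕ → A) (k i : ℕ) : oshift^[k] x i = x (i + k) := by
  induction k generalizing x with
  | zero => rfl
  | succ k ih => rw [iterate_succ_apply, ih]; rfl

lemma tshift_iterate_apply (z : ℤ → A) (k : ℕ) (i : ℤ) : tshift^[k] z i = z (i + k) := by
  induction k generalizing z with
  | zero => simp
  | succ k ih => rw [iterate_succ_apply, ih]; simp only [tshift]; push_cast; ring_nf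

lemma oshift_iterate_eq_self_iff {x : ℕ → A} {n : ℕ} : oshift^[n] x = x ↔ Periodic x n := by
  simp only [funext_iff, oshift_iterate_apply, Periodic]

lemma oPeriodic_iff {x : ℕ → A} : OPeriodic x ↔ ∃ n ≠ 0, Periodic x n := by
  simp only [OPeriodic, oshift_iterate_eq_self_iff, Nat.one_le_iff_ne_zero]

lemma tPeriodic_of_periodic {s : ℤ → A} {n : ℕ} (hn : n ≠ 0) (hs : Periodic s n) :
    TPeriodic s :=
  ⟨n, Nat.one_le_iff_ne_zero.2 hn, funext fun i => by rw [tshift_iterate_apply, hs]⟩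

lemma OPeriodic.iterate {x : ℕ → A} (hx : OPeriodic x) (k : ℕ) : OPeriodic (oshift^[k] x) := by
  obtain ⟨n, hn, hxn⟩ := hx
  exact ⟨n, hn, by rw [← iterate_add_apply, add_comm, iterate_add_apply, hxn]⟩

lemma OPeriodic.eq_of_eventuallyEq {x y : ℕ → A} (hx : OPeriodic x) (hy : OPeriodic y)
    (h : x =ᶠ[atTop] y) : x = y := by
  obtain ⟨m, hm, hxm⟩ := oPeriodic_iff.1 hx
  obtain ⟨n, hn, hyn⟩ := oPeriodic_iff.1 hy
  obtain ⟨B, hB⟩ := eventually_atTop.1 h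
  funext j
  have hxj := hxm.nat_mul (B * n) j
  have hyj := hyn.nat_mul (B * m) j
  simp only [Nat.cast_id] at hxj hyj
  have hmn : B ≤ j + B * n * m := by
    have : 1 ≤ n * m := Nat.one_le_iff_ne_zero.2 (Nat.mul_ne_zero hn hm)
    nlinarith
  rw [← hxj, ← hyj, show B * m * n = B * n * m by ring]
  exact hB _ hmn

def splice (x y : ℕ → A) (a : ℕ) : ℕ → A := fun j => if j < a then x j else y (j - a)

lemma oshift_iterate_splice (x y : ℕ → A) (a : ℕ) : oshift^[a] (splice x y a) = y :=
  funext fun j => by simp [oshift_iterate_apply, splice]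

lemma splice_mem_cylinder {x y : ℕ → A} {a n : ℕ} (h : y ∈ cylinder (oshift^[a] x) n) :
    splice x y a ∈ cylinder x (a + n) := by
  intro j hj
  simp only [splice]
  split_ifs with hja
  · rfl
  · rw [h (j - a) (by omega), oshift_iterate_apply, Nat.sub_add_cancel (not_lt.1 hja)]

lemma aper1_subset (X : Set (ℕ → A)) : Aper1 X ⊆ X := fun _ hx => hx.1

lemma eventuallyEq_of_oshift_iterate_eq {x p : ℕ → A} {K : ℕ} (h : oshift^[K] x = p)
    (hp : Periodic p K) : x =ᶠ[atTop] p :=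
  eventually_atTop.2 ⟨K, fun j hj =>
    calc x j = oshift^[K] x (j - K) := by rw [oshift_iterate_apply, Nat.sub_add_cancel hj]
      _ = p j := by rw [h, ← hp (j - K), Nat.sub_add_cancel hj]⟩

lemma ShiftCommuting1.iterate_apply {X : Set (ℕ → A)} {f : Aper1 X → Aper1 X}
    (hf : ShiftCommuting1 f) (hX : MapsTo oshift X X) {x : ℕ → A} (hx : x ∈ Aper1 X)
    (k : ℕ) (hk : oshift^[k] x ∈ Aper1 X) :
    (f ⟨oshift^[k] x, hk⟩ : ℕ → A) = oshift^[k] (f ⟨x, hx⟩) := by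
  induction k generalizing x with
  | zero => rfl
  | succ k ih =>
    have hσx : oshift x ∈ Aper1 X := ⟨hX hx.1, fun h => hk.2 (h.iterate k)⟩
    exact (ih hσx hk).trans (congrArg _ (hf ⟨x, hx⟩ hσx))

lemma RestrictsTo1.comp {X : Set (ℕ → A)} {φ ψ : X → X} {f g : Aper1 X → Aper1 X}
    (hφ : RestrictsTo1 φ f) (hψ : RestrictsTo1 ψ g) : RestrictsTo1 (φ ∘ ψ) (f ∘ g) := by
  intro x hx
  have hψx : ψ ⟨x, hx.1⟩ = ⟨g ⟨x, hx⟩, (g ⟨x, hx⟩).2.1⟩ := Subtype.ext (hψ x hx)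
  simp only [comp_apply, hψx]
  exact hφ _ (g ⟨x, hx⟩).2

lemma RestrictsTo1.unique {X : Set (ℕ → A)} {φ : X → X} {f g : Aper1 X → Aper1 X}
    (hf : RestrictsTo1 φ f) (hg : RestrictsTo1 φ g) : f = g :=
  funext fun x => Subtype.ext ((hf x.1 x.2).symm.trans (hg x.1 x.2))

lemma continuous_oshift [TopologicalSpace A] : Continuous (oshift : (ℕ → A) → ℕ → A) :=
  continuous_pi fun i => continuous_apply (i + 1)

section Cylinder

variable [TopologicalSpace A] [DiscreteTopology A]

lemma nhds_hasBasis_cylinder (x : ℕ → A) : (𝓝 x).HasBasis (fun _ => True) (cylinder x) := by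
  refine ⟨fun s => ⟨fun hs => ?_, fun ⟨n, _, hn⟩ =>
    Filter.mem_of_superset ((isOpen_cylinder _ x n).mem_nhds (self_mem_cylinder x n)) hn⟩⟩
  obtain ⟨_, ⟨y, n, rfl⟩, hx, hsub⟩ := (isTopologicalBasis_cylinders _).mem_nhds_iff.1 hs
  exact ⟨n, trivial, (mem_cylinder_iff_eq.1 hx).symm ▸ hsub⟩

lemma Continuous.exists_cylinder {S T : Set (ℕ → A)} {f : S → T} (hf : Continuous f) (x : S)
    (m : ℕ) : ∃ N, ∀ y : S, (y : ℕ → A) ∈ cylinder x N → (f y : ℕ → A) ∈ cylinder (f x) m := by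
  obtain ⟨N, -, hN⟩ := (((nhds_hasBasis_cylinder (x : ℕ → A)).comap Subtype.val).tendsto_iff
    (nhds_hasBasis_cylinder (f x : ℕ → A))).1
    (by rw [← nhds_subtype]; exact (continuous_subtype_val.comp hf).tendsto x) m trivial
  exact ⟨N, fun y hy => hN y hy⟩

lemma dense_of_forall_exists_mem_cylinder {X : Set (ℕ → A)} {P : (ℕ → A) → Prop}
    (h : ∀ z ∈ X, ∀ n, ∃ y ∈ cylinder z n, y ∈ X ∧ P y) : Dense {x : X | P x} := by
  intro x
  rw [mem_closure_iff_nhds_basis (nhds_subtype X x ▸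
    (nhds_hasBasis_cylinder (x : ℕ → A)).comap Subtype.val)]
  intro n _
  obtain ⟨y, hyx, hyX, hy⟩ := h x x.2 n
  exact ⟨⟨y, hyX⟩, hy, hyx⟩

end Cylinder

section Extension

variable [TopologicalSpace A] {X : Set (ℕ → A)}

lemma isDenseInducing_inclusion_aper1 (hdense : Dense {x : X | (x : ℕ → A) ∈ Aper1 X}) :
    IsDenseInducing (inclusion (aper1_subset X)) :=
  ⟨(IsEmbedding.inclusion _).isInducing, by rwa [DenseRange, range_inclusion]⟩

lemma eq_of_restrictsTo1 [T2Space A] (hdense : Dense {x : X | (x : ℕ → A) ∈ Aper1 X})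
    {f : Aper1 X → Aper1 X} {φ ψ : X → X} (hφ : Continuous φ) (hψ : Continuous ψ)
    (hφf : RestrictsTo1 φ f) (hψf : RestrictsTo1 ψ f) : φ = ψ :=
  (isDenseInducing_inclusion_aper1 hdense).dense.equalizer hφ hψ <| funext fun x =>
    Subtype.ext ((hφf x.1 x.2).trans (hψf x.1 x.2).symm)

theorem exists_extension [T3Space A] (hX : MapsTo oshift X X)
    (hdense : Dense {x : X | (x : ℕ → A) ∈ Aper1 X ∧ oshift (x : ℕ → A) ∈ Aper1 X})
    {f : Aper1 X → Aper1 X} (hf : Continuous f) (hfσ : ShiftCommuting1 f)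
    (hlim : ∀ p ∈ X, OPeriodic p →
      ∃ V ∈ X, Tendsto (fun y => (f y : ℕ → A)) (comap (↑) (𝓝 p)) (𝓝 V)) :
    ∃ φ : X → X, Continuous φ ∧ ShiftCommuting1 φ ∧ RestrictsTo1 φ f := by
  set ι := inclusion (aper1_subset X)
  have hι := isDenseInducing_inclusion_aper1 (hdense.mono fun x hx => hx.1)
  have hιf : Continuous (ι ∘ f) := (continuous_inclusion _).comp hf
  set φ := hι.extend (ι ∘ f)
  have hφf : RestrictsTo1 φ f := fun x hx => congrArg Subtype.val (hι.extend_eq hιf ⟨x, hx⟩)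
  have hφ : Continuous φ := by
    refine hι.continuous_extend fun b => ?_
    by_cases hb : OPeriodic (b : ℕ → A)
    · obtain ⟨V, hV, hfV⟩ := hlim b b.2 hb
      refine ⟨⟨V, hV⟩, ?_⟩
      rw [nhds_subtype X b, comap_comap, nhds_subtype X ⟨V, hV⟩, tendsto_comap_iff]
      exact hfV
    · refine ⟨ι (f ⟨b, b.2, hb⟩), ?_⟩
      rw [← hι.isInducing.nhds_eq_comap ⟨b, b.2, hb⟩]
      exact hιf.tendsto _
  refine ⟨φ, hφ, ?_, hφf⟩
  have hcomm : (fun x => (φ (hX.restrict oshift X X x) : ℕ → A)) =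
      fun x => oshift (φ x : ℕ → A) := by
    refine (continuous_subtype_val.comp (hφ.comp (continuous_oshift.restrict hX))).ext_on hdense
      (continuous_oshift.comp (continuous_subtype_val.comp hφ)) ?_
    rintro x ⟨hx, hσx⟩
    show (φ ⟨oshift x, hσx.1⟩ : ℕ → A) = oshift (φ ⟨x, hx.1⟩ : ℕ → A)
    rw [hφf _ hσx, hφf _ hx]
    exact hfσ ⟨x, hx⟩ hσx
  exact fun x _ => congrFun hcomm x

end Extension

section Subshift

variable [TopologicalSpace A] {Z : Set (ℤ → A)}

lemma IsSubshift.shift_mem (hZ : IsSubshift Z) {z : ℤ → A} (hz : z ∈ Z) (k : ℤ) :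
    (fun i => z (i + k)) ∈ Z := by
  induction k using Int.induction_on with
  | zero => simpa using hz
  | succ k ih =>
    rw [← hZ.2]
    exact ⟨_, ih, funext fun i => by simp only [tshift]; ring_nf⟩
  | pred k ih =>
    rw [← hZ.2] at ih
    obtain ⟨w, hw, hwz⟩ := ih
    convert hw using 1
    funext i
    have := congrFun hwz (i - 1)
    simp only [tshift, sub_add_cancel] at this
    rw [this]
    ring_nf

lemma mem_posRay_of_mem (hZ : IsSubshift Z) {z : ℤ → A} (hz : z ∈ Z) (k : ℤ) :
    (fun j : ℕ => z (j + k)) ∈ posRay Z :=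
  ⟨_, hZ.shift_mem hz k, rfl⟩

lemma mapsTo_oshift_posRay (hZ : IsSubshift Z) : MapsTo oshift (posRay Z) (posRay Z) := by
  rintro _ ⟨z, hz, rfl⟩
  convert mem_posRay_of_mem hZ hz 1 using 1
  funext j
  simp [oshift]

lemma exists_periodic_extension (hZ : IsSubshift Z) {p : ℕ → A} (hp : p ∈ posRay Z) {n : ℕ}
    (hn : n ≠ 0) (hpn : Periodic p n) : ∃ s ∈ Z, Periodic s n ∧ ∀ j : ℕ, s j = p j := by
  set s : ℤ → A := fun i => p (i % n).toNat
  have hs : Periodic s n := fun i => by simp only [s, ← Int.emod_eq_add_self_emod]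
  have hsp : ∀ j : ℕ, s j = p j := fun j => by
    simp only [s, ← Int.natCast_mod, Int.toNat_natCast, hpn.map_mod_nat]
  refine ⟨s, ?_, hs, hsp⟩
  obtain ⟨z, hz, hzp⟩ := hp
  -- `s` is the limit of the shifts of `z` by multiples of its period
  refine hZ.1.mem_of_tendsto (f := fun k : ℕ => fun i => z (i + k * n)) (b := atTop)
    (tendsto_pi_nhds.2 fun i => tendsto_nhds_of_eventually_eq ?_)
    (Eventually.of_forall fun k => hZ.shift_mem hz _)
  filter_upwards [eventually_ge_atTop i.natAbs] with k hk
  have hnonneg : 0 ≤ i + k * n := by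
    have : (k : ℤ) ≤ k * n := le_mul_of_one_le_right (by positivity) (by omega)
    omega
  obtain ⟨j, hj⟩ := Int.eq_ofNat_of_zero_le hnonneg
  calc z (i + k * n) = p j := by rw [hj]; exact congrFun hzp j
    _ = s i := by rw [← hsp j, ← hj, hs.nat_mul k i]

lemma Synchronizing.exists_glue (hZ : IsSubshift Z) {s : ℤ → A} (hs : Synchronizing Z s) :
    ∃ ℓ : ℕ, ∀ (c : ℤ) (x y : ℤ → A), x ∈ Z → y ∈ Z →
      (∀ i, c - ℓ ≤ i → i ≤ c + ℓ → x i = s (i - c) ∧ y i = s (i - c)) →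
      (fun i => if i < c then x i else y i) ∈ Z := by
  obtain ⟨ℓ, hℓ⟩ := hs
  refine ⟨ℓ, fun c x y hx hy hxy => ?_⟩
  have hwin : ∀ i : ℤ, -(ℓ : ℤ) ≤ i ∧ i ≤ ℓ → x (i + c) = s i ∧ y (i + c) = s i :=
    fun i hi => by simpa using hxy (i + c) (by omega) (by omega)
  convert hZ.shift_mem (hℓ _ (hZ.shift_mem hx c) _ (hZ.shift_mem hy c)
    (fun i hi => (hwin i hi).1) (fun i hi => (hwin i hi).2)) (-c) using 1
  funext i
  simp only [← sub_eq_add_neg, sub_add_cancel]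
  split_ifs <;> first
    | rfl | omega | exact (hxy i (by omega) (by omega)).1 | exact (hxy i (by omega) (by omega)).2

lemma exists_splice_mem (hZ : IsSubshift Z) (hsync : ∀ s ∈ Z, TPeriodic s → Synchronizing Z s)
    {Q : ℕ → A} (hQ : Q ∈ posRay Z) (hQper : OPeriodic Q) :
    ∃ L, ∀ x ∈ posRay Z, ∀ y ∈ posRay Z, ∀ a,
      oshift^[a] x ∈ cylinder Q L → y ∈ cylinder Q L → splice x y a ∈ posRay Z := by
  obtain ⟨n, hn, hQn⟩ := oPeriodic_iff.1 hQper
  obtain ⟨s, hsZ, hsn, hsQ⟩ := exists_periodic_extension hZ hQ hn hQn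
  obtain ⟨ℓ, hglue⟩ := (hsync s hsZ (tPeriodic_of_periodic hn hsn)).exists_glue hZ
  refine ⟨n * ℓ + ℓ + 1, ?_⟩
  rintro _ ⟨zx, hzx, rfl⟩ _ ⟨zy, hzy, rfl⟩ a hx hy
  have hnℓ : ℓ ≤ n * ℓ := Nat.le_mul_of_pos_left ℓ (Nat.pos_of_ne_zero hn)
  -- the gluing window sits inside the `Q`-block, at a multiple of the period of `s`
  set c : ℕ := a + n * ℓ with hc
  have hwin : ∀ i, (c : ℤ) - ℓ ≤ i → i ≤ (c : ℤ) + ℓ →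
      zx i = s (i - c) ∧ zy (i - a) = s (i - c) := by
    intro i h1 h2
    obtain ⟨k, rfl⟩ : ∃ k : ℕ, i = (k + a : ℕ) := ⟨(i - a).toNat, by omega⟩
    have hsk : s ((k + a : ℕ) - c) = Q k := by
      rw [show ((k + a : ℕ) : ℤ) - c = k - (ℓ : ℕ) * (n : ℤ) by push_cast [c]; ring,
        hsn.sub_nat_mul_eq, hsQ]
    refine ⟨?_, ?_⟩
    · rw [hsk, ← hx k (by omega), oshift_iterate_apply]
    · rw [hsk, ← hy k (by omega), show ((k + a : ℕ) : ℤ) - a = k by push_cast; ring]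
  convert mem_posRay_of_mem hZ (hglue c zx (fun i => zy (i - a)) hzx (hZ.shift_mem hzy (-a))
    hwin) 0 using 1
  funext j
  simp only [splice, add_zero, Nat.cast_lt]
  split_ifs with hja hjc hjc
  · rfl
  · omega
  · have hxj := hx (j - a) (by omega)
    simp only [oshift_iterate_apply, Nat.sub_add_cancel (not_lt.1 hja)] at hxj
    exact (hy (j - a) (by omega)).trans hxj.symm
  · push_cast [Nat.cast_sub (not_lt.1 hja)]
    ring_nf

variable [DiscreteTopology A]

lemma exists_ne_mem_cylinder_of_not_hasIsolatedPeriodicPt {S : Set (ℕ → A)}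
    (hS : ¬ HasIsolatedPeriodicPt S) {x : ℕ → A} (hx : x ∈ S) (hper : OPeriodic x) (n : ℕ) :
    ∃ y ∈ S, y ≠ x ∧ y ∈ cylinder x n := by
  by_contra! h
  refine hS ⟨x, hx, hper, cylinder x n, isOpen_cylinder _ x n, Set.ext fun y => ⟨?_, ?_⟩⟩
  · rintro ⟨hyx, hyS⟩
    by_contra hne
    exact h y hyS hne hyx
  · rintro rfl
    exact ⟨self_mem_cylinder _ _, hx⟩

lemma exists_aperiodic_mem_cylinder (hZ : IsSubshift Z)
    (hsync : ∀ s ∈ Z, TPeriodic s → Synchronizing Z s) (h1 : ¬ HasIsolatedPeriodicPt (posRay Z))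
    {z : ℕ → A} (hz : z ∈ posRay Z) (t : ℕ) : ∃ y ∈ cylinder z t, y ∈ Aper1 (posRay Z) := by
  by_cases hzper : OPeriodic z
  swap
  · exact ⟨z, self_mem_cylinder z t, hz, hzper⟩
  obtain ⟨L, hsplice⟩ := exists_splice_mem hZ hsync hz hzper
  obtain ⟨x, hx, hxz, hxzL⟩ :=
    exists_ne_mem_cylinder_of_not_hasIsolatedPeriodicPt h1 hz hzper (max t L)
  have hxzt : cylinder x t = cylinder z t :=
    mem_cylinder_iff_eq.1 (cylinder_anti _ (le_max_left _ _) hxzL)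
  by_cases hxper : OPeriodic x
  swap
  · exact ⟨x, hxzt ▸ self_mem_cylinder x t, hx, hxper⟩
  obtain ⟨m, hm, hxm⟩ := oPeriodic_iff.1 hxper
  obtain ⟨n, hn, hzn⟩ := oPeriodic_iff.1 hzper
  set M := m * n
  have hM : 0 < M := Nat.pos_of_ne_zero (Nat.mul_ne_zero hm hn)
  have hxM : Periodic x M := by simpa [M, mul_comm] using hxm.nat_mul n
  have hzM : Periodic z M := by simpa [M] using hzn.nat_mul m
  set y := splice x z M
  have hy : y ∈ posRay Z := hsplice x hx z hz M
    (by rw [oshift_iterate_eq_self_iff.2 hxM]; exact cylinder_anti _ (le_max_right _ _) hxzL)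
    (self_mem_cylinder _ _)
  have hyx : y ∈ cylinder x t :=
    cylinder_anti _ (by omega) <| splice_mem_cylinder (n := max t L) <| by
    rw [oshift_iterate_eq_self_iff.2 hxM, mem_cylinder_comm]; exact hxzL
  refine ⟨y, hxzt ▸ hyx, hy, fun hyper => hxz ?_⟩
  have hyz : y = z := hyper.eq_of_eventuallyEq hzper <|
    eventuallyEq_of_oshift_iterate_eq (oshift_iterate_splice x z M) hzM
  funext j
  rw [← hxM.map_mod_nat, ← hzM.map_mod_nat, ← hyz]
  simp [y, splice, Nat.mod_lt j hM]

lemma dense_aperiodic_oshift_aperiodic (hZ : IsSubshift Z)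
    (hsync : ∀ s ∈ Z, TPeriodic s → Synchronizing Z s) (h1 : ¬ HasIsolatedPeriodicPt (posRay Z)) :
    Dense {x : posRay Z | (x : ℕ → A) ∈ Aper1 (posRay Z) ∧
      oshift (x : ℕ → A) ∈ Aper1 (posRay Z)} := by
  refine dense_of_forall_exists_mem_cylinder
    (P := fun y => y ∈ Aper1 (posRay Z) ∧ oshift y ∈ Aper1 (posRay Z)) fun z hz t => ?_
  have hσ := mapsTo_oshift_posRay hZ
  by_cases hσz : OPeriodic (oshift z)
  swap
  · exact ⟨z, self_mem_cylinder z t, hz, ⟨hz, fun h => hσz (h.iterate 1)⟩, hσ hz, hσz⟩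
  obtain ⟨L, hsplice⟩ := exists_splice_mem hZ hsync (hσ hz) hσz
  obtain ⟨u, hu, hu'⟩ := exists_aperiodic_mem_cylinder hZ hsync h1 (hσ hz) L
  obtain ⟨r, hr, hσzr⟩ := hσz
  set a := r * t + 1 with ha
  have hza : oshift^[a] z = oshift z := by
    rw [iterate_succ_apply, iterate_mul, iterate_fixed hσzr]
  set y := splice z u a
  have hy : y ∈ posRay Z := hsplice z hz u hu'.1 a (hza ▸ self_mem_cylinder _ _) hu
  have hyu : oshift^[a] y = u := oshift_iterate_splice z u a
  have hyz : y ∈ cylinder z t :=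
    cylinder_anti _ (show t ≤ a + 0 by rw [ha]; nlinarith) (splice_mem_cylinder (by simp))
  exact ⟨y, hyz, hy, ⟨hy, fun h => hu'.2 (hyu ▸ h.iterate a)⟩, hσ hy,
    fun h => hu'.2 (hyu ▸ h.iterate (r * t))⟩

lemma exists_aperiodic_oshift_iterate_eq (hZ : IsSubshift Z)
    (hsync : ∀ s ∈ Z, TPeriodic s → Synchronizing Z s) (h2 : ¬ HasIsolatedPeriodicPt (negRay Z))
    {p : ℕ → A} (hp : p ∈ posRay Z) (hper : OPeriodic p) :
    ∃ ρ ∈ Aper1 (posRay Z), ∃ K, oshift^[K] ρ = p := by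
  obtain ⟨n, hn, hpn⟩ := oPeriodic_iff.1 hper
  obtain ⟨s, hsZ, hsn, hsp⟩ := exists_periodic_extension hZ hp hn hpn
  obtain ⟨ℓ, hglue⟩ := (hsync s hsZ (tPeriodic_of_periodic hn hsn)).exists_glue hZ
  have hsneg : (fun j : ℕ => s (-j)) ∈ negRay Z := ⟨s, hsZ, rfl⟩
  have hsnegper : OPeriodic (fun j : ℕ => s (-j)) :=
    oPeriodic_iff.2 ⟨n, hn, fun j => by
      simp only [Nat.cast_add, neg_add, ← sub_eq_add_neg, hsn.sub_eq]⟩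
  set b := ℓ * n
  have hbℓ : ℓ ≤ b := Nat.le_mul_of_pos_right ℓ (Nat.pos_of_ne_zero hn)
  have hsb : ∀ i, s (i + b) = s i := fun i => by simpa [b] using hsn.nat_mul ℓ i
  obtain ⟨_, ⟨zq, hzq, rfl⟩, hqs, hqsb⟩ :=
    exists_ne_mem_cylinder_of_not_hasIsolatedPeriodicPt h2 hsneg hsnegper (b + ℓ + 1)
  obtain ⟨d, hd⟩ := Function.ne_iff.1 hqs
  have hdb : b < d := by
    by_contra! hdb
    exact hd (hqsb d (by omega))
  have hzqs : ∀ i : ℤ, -(b + ℓ : ℤ) ≤ i → i ≤ 0 → zq i = s i := fun i h1 h2 => by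
    obtain ⟨j, rfl⟩ : ∃ j : ℕ, i = -j := ⟨(-i).toNat, by omega⟩
    exact hqsb j (by omega)
  set v : ℤ → A := fun i => if i < -(b : ℤ) then zq i else s i
  have hv : v ∈ Z := hglue (-b) zq s hzq hsZ fun i h1 h2 => by
    rw [sub_neg_eq_add, hsb, hzqs i (by omega) (by omega)]
    exact ⟨rfl, rfl⟩
  set K := d * n
  have hdK : d ≤ K := Nat.le_mul_of_pos_right d (Nat.pos_of_ne_zero hn)
  have hsK : ∀ i, s (i - K) = s i := fun i => by simpa [K] using hsn.sub_nat_mul_eq d (x := i)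
  set ρ : ℕ → A := fun j => v (j + -(K : ℤ))
  have hρK : oshift^[K] ρ = p := funext fun j => by
    simp only [oshift_iterate_apply, ρ, v, Nat.cast_add, add_neg_cancel_right]
    rw [if_neg (by omega), hsp]
  have hρp : ρ ≠ p := fun h => hd <| by
    have := congrFun h (K - d)
    simp only [ρ, v, Nat.cast_sub hdK, ← sub_eq_add_neg] at this
    rw [if_pos (by omega), ← hsp, ← hsK, Nat.cast_sub hdK, sub_sub_cancel_left] at this
    exact this
  refine ⟨ρ, ⟨mem_posRay_of_mem hZ hv _, fun hρ => hρp (hρ.eq_of_eventuallyEq hper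
    (eventuallyEq_of_oshift_iterate_eq hρK ?_))⟩, K, hρK⟩
  simpa [K, mul_comm] using hpn.nat_mul d

lemma exists_tendsto_of_oPeriodic (hZ : IsSubshift Z)
    (hsync : ∀ s ∈ Z, TPeriodic s → Synchronizing Z s) (h2 : ¬ HasIsolatedPeriodicPt (negRay Z))
    {f : Aper1 (posRay Z) → Aper1 (posRay Z)} (hf : Continuous f) (hfσ : ShiftCommuting1 f)
    {p : ℕ → A} (hp : p ∈ posRay Z) (hper : OPeriodic p) :
    ∃ V ∈ posRay Z, Tendsto (fun y => (f y : ℕ → A)) (comap (↑) (𝓝 p)) (𝓝 V) := by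
  have hσ := mapsTo_oshift_posRay hZ
  obtain ⟨ρ, hρ, K, hρK⟩ := exists_aperiodic_oshift_iterate_eq hZ hsync h2 hp hper
  obtain ⟨L, hsplice⟩ := exists_splice_mem hZ hsync hp hper
  refine ⟨oshift^[K] (f ⟨ρ, hρ⟩), hσ.iterate K (f ⟨ρ, hρ⟩).2.1, ?_⟩
  rw [((nhds_hasBasis_cylinder p).comap _).tendsto_iff (nhds_hasBasis_cylinder _)]
  intro m _
  obtain ⟨N, hN⟩ := hf.exists_cylinder ⟨ρ, hρ⟩ (K + m)
  refine ⟨max N L, trivial, fun y hy => ?_⟩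
  set χ := splice ρ y K
  have hχK : oshift^[K] χ = y := oshift_iterate_splice _ _ _
  have hχ : χ ∈ Aper1 (posRay Z) :=
    ⟨hsplice ρ hρ.1 y y.2.1 K (hρK ▸ self_mem_cylinder _ _)
      (cylinder_anti _ (le_max_right _ _) hy), fun h => y.2.2 (hχK ▸ h.iterate K)⟩
  have hχρ : χ ∈ cylinder ρ N :=
    cylinder_anti _ (by omega) (splice_mem_cylinder (n := max N L) (hρK ▸ hy))
  have hfy : (f y : ℕ → A) = oshift^[K] (f ⟨χ, hχ⟩) := by
    rw [← hfσ.iterate_apply hσ hχ K (hχK ▸ y.2)]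
    exact congrArg _ (congrArg f (Subtype.ext hχK.symm))
  intro i hi
  rw [hfy, oshift_iterate_apply, oshift_iterate_apply]
  exact hN ⟨χ, hχ⟩ hχρ (i + K) (by omega)

end Subshift

end

theorem statement9_general {A : Type*} [TopologicalSpace A] [DiscreteTopology A]
    (Z : Set (ℤ → A)) (hZ : IsSubshift Z)
    (hsync : ∀ s ∈ Z, TPeriodic s → Synchronizing Z s)
    (h1 : ¬ HasIsolatedPeriodicPt (posRay Z)) (h2 : ¬ HasIsolatedPeriodicPt (negRay Z))
    (X : Set (ℕ → A)) (hX : X = posRay Z) :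
    (∀ φ' : {f : Aper1 X → Aper1 X // Continuous f ∧ ShiftCommuting1 f},
      ∃! φ : X → X, Continuous φ ∧ ShiftCommuting1 φ ∧ RestrictsTo1 φ φ'.1) ∧
    ∃ ext : {f : Aper1 X → Aper1 X // Continuous f ∧ ShiftCommuting1 f} →
        {g : X → X // Continuous g ∧ ShiftCommuting1 g},
      (∀ φ', RestrictsTo1 (ext φ').1 φ'.1) ∧
      Function.Injective ext ∧
      (∀ φ' : {f : Aper1 X → Aper1 X // Continuous f ∧ ShiftCommuting1 f},
        (∀ x : Aper1 X, φ'.1 x = x) → ∀ y : X, (ext φ').1 y = y) ∧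
      (∀ φ' ψ' χ' : {f : Aper1 X → Aper1 X // Continuous f ∧ ShiftCommuting1 f},
        (∀ x : Aper1 X, χ'.1 x = φ'.1 (ψ'.1 x)) →
        ∀ y : X, (ext χ').1 y = (ext φ').1 ((ext ψ').1 y)) := by
  subst hX
  have hdense := dense_aperiodic_oshift_aperiodic hZ hsync h1
  have hdense' := hdense.mono fun _ hx => hx.1
  choose ext hcont hcomm hres using fun φ' : {f : Aper1 (posRay Z) → Aper1 (posRay Z) //
      Continuous f ∧ ShiftCommuting1 f} =>
    exists_extension (mapsTo_oshift_posRay hZ) hdense φ'.2.1 φ'.2.2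
      fun p hp hper => exists_tendsto_of_oPeriodic hZ hsync h2 φ'.2.1 φ'.2.2 hp hper
  refine ⟨fun φ' => ⟨ext φ', ⟨hcont φ', hcomm φ', hres φ'⟩,
      fun ψ ⟨hψ, _, hψφ'⟩ => eq_of_restrictsTo1 hdense' hψ (hcont φ') hψφ' (hres φ')⟩,
    fun φ' => ⟨ext φ', hcont φ', hcomm φ'⟩, hres, ?_, ?_, ?_⟩
  · intro φ' ψ' h
    have h' : ext φ' = ext ψ' := congrArg Subtype.val h
    exact Subtype.ext ((hres φ').unique (h' ▸ hres ψ'))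
  · intro φ' hφ' y
    have hid : RestrictsTo1 id φ'.1 := fun x hx => (congrArg Subtype.val (hφ' ⟨x, hx⟩)).symm
    exact congrFun (eq_of_restrictsTo1 hdense' (hcont φ') continuous_id (hres φ') hid) y
  · intro φ' ψ' χ' hχ' y
    have hcomp : RestrictsTo1 (ext φ' ∘ ext ψ') χ'.1 := funext hχ' ▸ (hres φ').comp (hres ψ')
    exact congrFun
      (eq_of_restrictsTo1 hdense' (hcont χ') ((hcont φ').comp (hcont ψ')) (hres χ') hcomp) y

/-- With `X = Z_ℕ` as in the previous statement, every continuous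
shift-commuting self-map of `X'` extends uniquely to a continuous shift-commuting
self-map of `X`, and the extension map is an injective monoid homomorphism (it is
injective, preserves the identity, and preserves composition) from the monoid of
continuous shift-commuting self-maps of `X'` into `End(X)`. -/
theorem statement9 {A : Type*} [Fintype A] [TopologicalSpace A] [DiscreteTopology A]
    (Z : Set (ℤ → A)) (hZ : IsSubshift Z)
    (hsync : ∀ s ∈ Z, TPeriodic s → Synchronizing Z s)
    (h1 : ¬ HasIsolatedPeriodicPt (posRay Z)) (h2 : ¬ HasIsolatedPeriodicPt (negRay Z))
    (X : Set (ℕ → A)) (hX : X = posRay Z) :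
    (∀ φ' : {f : Aper1 X → Aper1 X // Continuous f ∧ ShiftCommuting1 f},
      ∃! φ : X → X, Continuous φ ∧ ShiftCommuting1 φ ∧ RestrictsTo1 φ φ'.1) ∧
    ∃ ext : {f : Aper1 X → Aper1 X // Continuous f ∧ ShiftCommuting1 f} →
        {g : X → X // Continuous g ∧ ShiftCommuting1 g},
      (∀ φ', RestrictsTo1 (ext φ').1 φ'.1) ∧
      Function.Injective ext ∧
      (∀ φ' : {f : Aper1 X → Aper1 X // Continuous f ∧ ShiftCommuting1 f},
        (∀ x : Aper1 X, φ'.1 x = x) → ∀ y : X, (ext φ').1 y = y) ∧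
      (∀ φ' ψ' χ' : {f : Aper1 X → Aper1 X // Continuous f ∧ ShiftCommuting1 f},
        (∀ x : Aper1 X, χ'.1 x = φ'.1 (ψ'.1 x)) →
        ∀ y : X, (ext χ').1 y = (ext φ').1 ((ext ψ').1 y)) :=
  statement9_general Z hZ hsync h1 h2 X hX
end
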